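/- Let k ≥ 1, let Q1 and Q2 be positive definite integral quadratic forms in k variables, let 0 < λ < 1, and let 1 ≤ p, q ≤ ∞. If there exists a constant A such that ‖J_{Q1,Q2,λ} f‖_{ℓ^q} ≤ A ‖f‖_{ℓ^p} for every finitely supported f : ℤ^k × ℤ → ℂ, then 1/q < λ and 1/p > 1 − λ. -/

import Mathlib

/-!
Both conditions come from the dyadic shells `(2^j, 2^(j+1)]^k` of `ℤ^k`: on each of them
`∑ ‖m‖^(-k)` lies between `2^(-k)` and `1`, and `Q₂ m ≤ C ‖m‖²`.

For `1/q < λ`, apply `J` to the unit mass at the origin: `J δ (m, Q₁ m) = Q₂(m)^(-kλ/2)`, which is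
at least `c ‖m‖^(-kλ)`. If `λq ≤ 1`, every shell contributes at least a fixed amount to
`‖J δ‖_q^q`, which is therefore infinite.

For `1 - λ < 1/p`, put the mass `‖m‖^(-k(1-λ))` at `(-m, -Q₁ m)` for `m` in the first `J` shells.
Then `J f (0,0) ≥ c ∑ ‖m‖^(-k) ≥ c' J`, while `p(1-λ) ≥ 1` would give `‖f‖_p ≤ J^(1/p)`; since
`1/p ≤ 1 - λ < 1`, letting `J → ∞` is absurd.
-/

open Matrix MeasureTheory
open scoped NNReal ENNReal

noncomputable section

lemma eLpNorm_count_eq_tsum {α E : Type*} [MeasurableSpace α] [MeasurableSingletonClass α]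
    [NormedAddCommGroup E] (g : α → E) {p : ℝ≥0∞} (hp₀ : p ≠ 0) (hp : p ≠ ∞) :
    eLpNorm g p Measure.count = (∑' x, ‖g x‖ₑ ^ p.toReal) ^ p.toReal⁻¹ := by
  rw [eLpNorm_eq_lintegral_rpow_enorm_toReal hp₀ hp, lintegral_count, one_div]

lemma exists_mul_rpow_lt_ofReal_mul {c ρ : ℝ} (hc : 0 < c) (hρ₀ : 0 ≤ ρ) (hρ : ρ < 1)
    (A : ℝ≥0) : ∃ J : ℕ, (A : ℝ≥0∞) * (J : ℝ≥0∞) ^ ρ < ENNReal.ofReal (c * J) := by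
  have hlim : Filter.Tendsto (fun x : ℝ => (A : ℝ) * x ^ (ρ - 1)) Filter.atTop (nhds 0) := by
    simpa using (tendsto_rpow_neg_atTop (by linarith : 0 < 1 - ρ)).const_mul (A : ℝ)
  obtain ⟨J, hJ, hJ₀⟩ := ((hlim.eventually (gt_mem_nhds hc)).and
    (Filter.eventually_gt_atTop 0)).natCast_atTop.exists
  refine ⟨J, ?_⟩
  rw [← ENNReal.ofReal_coe_nnreal, ← ENNReal.ofReal_natCast,
    ENNReal.ofReal_rpow_of_nonneg (Nat.cast_nonneg _) hρ₀, ← ENNReal.ofReal_mul A.coe_nonneg,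
    ENNReal.ofReal_lt_ofReal_iff (by positivity)]
  calc (A : ℝ) * (J : ℝ) ^ ρ = (A : ℝ) * (J : ℝ) ^ (ρ - 1) * J := by
        rw [mul_assoc, ← Real.rpow_add_one hJ₀.ne']; ring_nf
    _ < c * J := by gcongr

lemma mul_rpow_neg_le_rpow_neg_of_le_mul_sq {t C x e : ℝ} (ht : 0 < t) (hx : 0 ≤ x)
    (htC : t ≤ C * x ^ 2) (he : 0 ≤ e) : C ^ (-e) * x ^ (-(2 * e)) ≤ t ^ (-e) := by
  have hC : 0 < C := pos_of_mul_pos_left (ht.trans_le htC) (by positivity)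
  calc C ^ (-e) * x ^ (-(2 * e)) = (C * x ^ 2) ^ (-e) := by
        rw [Real.mul_rpow hC.le (by positivity), ← Real.rpow_natCast_mul hx]; push_cast; ring_nf
    _ ≤ t ^ (-e) := Real.rpow_le_rpow_of_nonpos ht htC (by linarith)

section QuadraticForm

variable {ι : Type*} [Fintype ι] (A : Matrix ι ι ℤ) (m : ι → ℤ)

lemma intCast_dotProduct_mulVec :
    ((m ⬝ᵥ A *ᵥ m : ℤ) : ℝ) = ((↑) ∘ m) ⬝ᵥ A.map ((↑) : ℤ → ℝ) *ᵥ ((↑) ∘ m) := by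
  have := RingHom.map_dotProduct (Int.castRingHom ℝ) m (A *ᵥ m)
  simp only [eq_intCast] at this
  rw [this]
  congr 1
  ext i
  exact RingHom.map_mulVec (Int.castRingHom ℝ) A m i

lemma dotProduct_mulVec_pos_of_posDef (hA : (A.map ((↑) : ℤ → ℝ)).PosDef) (hm : m ≠ 0) :
    0 < m ⬝ᵥ A *ᵥ m := by
  have hm' : ((↑) ∘ m : ι → ℝ) ≠ 0 := fun h =>
    hm (funext fun i => by simpa using congrFun h i)
  have := hA.dotProduct_mulVec_pos hm'
  rw [star_trivial, ← intCast_dotProduct_mulVec] at this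
  exact_mod_cast this

lemma dotProduct_mulVec_le_mul_norm_sq :
    ((m ⬝ᵥ A *ᵥ m : ℤ) : ℝ) ≤ (∑ i, ∑ j, |(A i j : ℝ)|) * ‖m‖ ^ 2 := by
  have hm : ∀ i, |(m i : ℝ)| ≤ ‖m‖ := fun i => by
    simpa [Int.norm_eq_abs] using norm_le_pi_norm m i
  rw [intCast_dotProduct_mulVec, Finset.sum_mul]
  simp only [dotProduct, mulVec, Finset.mul_sum, Finset.sum_mul, map_apply, Function.comp_apply]
  refine Finset.sum_le_sum fun i _ => Finset.sum_le_sum fun j _ => ?_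
  calc (m i : ℝ) * ((A i j : ℝ) * m j)
      ≤ |(m i : ℝ)| * (|(A i j : ℝ)| * |(m j : ℝ)|) := by
        rw [← abs_mul, ← abs_mul]; exact le_abs_self _
    _ ≤ ‖m‖ * (|(A i j : ℝ)| * ‖m‖) := by gcongr <;> exact hm _
    _ = |(A i j : ℝ)| * ‖m‖ ^ 2 := by ring

variable {A} {Q : (ι → ℤ) → ℤ}

lemma pos_and_le_mul_norm_sq_of_two_mul_eq (hA : (A.map ((↑) : ℤ → ℝ)).PosDef)
    (hQ : ∀ x, 2 * Q x = x ⬝ᵥ A *ᵥ x) {m : ι → ℤ} (hm : m ≠ 0) :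
    0 < (Q m : ℝ) ∧ (Q m : ℝ) ≤ (∑ i, ∑ j, |(A i j : ℝ)|) * ‖m‖ ^ 2 := by
  have hpos := dotProduct_mulVec_pos_of_posDef A m hA hm
  have hle := dotProduct_mulVec_le_mul_norm_sq A m
  rw [← hQ] at hpos hle
  push_cast at hle
  have hQm : (0 : ℝ) < Q m := by exact_mod_cast (by omega : 0 < Q m)
  exact ⟨hQm, by linarith⟩

end QuadraticForm

def dyadicShell (k j : ℕ) : Finset (Fin k → ℤ) :=
  Fintype.piFinset fun _ => Finset.Ioc (2 ^ j) (2 ^ (j + 1))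

def dyadicBlock (k J : ℕ) : Finset (Fin k → ℤ) :=
  (Finset.range J).biUnion (dyadicShell k)

section DyadicShell

variable {k j : ℕ} {m : Fin k → ℤ}

lemma card_dyadicShell (k j : ℕ) : (dyadicShell k j).card = (2 ^ j) ^ k := by
  have : ((2 : ℤ) ^ (j + 1) - 2 ^ j).toNat = 2 ^ j := by
    rw [pow_succ, mul_two, add_sub_cancel_left]; exact_mod_cast Int.toNat_natCast (2 ^ j)
  simp [dyadicShell, Int.card_Ioc, this]

lemma norm_le_of_mem_dyadicShell (hm : m ∈ dyadicShell k j) : ‖m‖ ≤ 2 ^ (j + 1) := by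
  refine (pi_norm_le_iff_of_nonneg (by positivity)).2 fun i => ?_
  have := Finset.mem_Ioc.1 (Fintype.mem_piFinset.1 hm i)
  rw [Int.norm_eq_abs, abs_of_pos (by exact_mod_cast (pow_pos two_pos j).trans this.1)]
  exact_mod_cast this.2

lemma lt_norm_of_mem_dyadicShell (hk : 1 ≤ k) (hm : m ∈ dyadicShell k j) : 2 ^ j < ‖m‖ := by
  have := (Finset.mem_Ioc.1 (Fintype.mem_piFinset.1 hm ⟨0, hk⟩)).1
  calc (2 : ℝ) ^ j < |(m ⟨0, hk⟩ : ℝ)| := by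
        rw [abs_of_pos (by exact_mod_cast (pow_pos two_pos j).trans this)]; exact_mod_cast this
    _ ≤ ‖m‖ := by simpa [Int.norm_eq_abs] using norm_le_pi_norm m ⟨0, hk⟩

lemma pairwise_disjoint_dyadicShell (hk : 1 ≤ k) :
    Pairwise (Function.onFun Disjoint (dyadicShell k)) := by
  intro j j' hjj'
  refine Finset.disjoint_left.2 fun m hm hm' => hjj' ?_
  have h₁ := (lt_norm_of_mem_dyadicShell hk hm).trans_le (norm_le_of_mem_dyadicShell hm')
  have h₂ := (lt_norm_of_mem_dyadicShell hk hm').trans_le (norm_le_of_mem_dyadicShell hm)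
  rw [pow_lt_pow_iff_right₀ one_lt_two] at h₁ h₂
  omega

lemma one_le_norm_of_mem_dyadicBlock (hk : 1 ≤ k) {J : ℕ} (hm : m ∈ dyadicBlock k J) :
    1 ≤ ‖m‖ := by
  obtain ⟨j, -, hj⟩ := Finset.mem_biUnion.1 hm
  exact (one_le_pow₀ one_le_two).trans (lt_norm_of_mem_dyadicShell hk hj).le

lemma ne_zero_of_mem_dyadicBlock (hk : 1 ≤ k) {J : ℕ} (hm : m ∈ dyadicBlock k J) : m ≠ 0 :=
  norm_pos_iff.1 (one_pos.trans_le (one_le_norm_of_mem_dyadicBlock hk hm))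

lemma sum_dyadicShell_norm_rpow_neg (hk : 1 ≤ k) (j : ℕ) :
    ((2 : ℝ) ^ k)⁻¹ ≤ ∑ m ∈ dyadicShell k j, ‖m‖ ^ (-(k : ℝ)) ∧
      ∑ m ∈ dyadicShell k j, ‖m‖ ^ (-(k : ℝ)) ≤ 1 := by
  have hterm : ∀ m ∈ dyadicShell k j, ‖m‖ ^ (-(k : ℝ)) = (‖m‖ ^ k)⁻¹ := fun m _ => by
    rw [Real.rpow_neg (norm_nonneg m), Real.rpow_natCast]
  rw [Finset.sum_congr rfl hterm]
  have hcard : ((dyadicShell k j).card : ℝ) = ((2 : ℝ) ^ j) ^ k := by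
    rw [card_dyadicShell]; push_cast; rfl
  constructor
  · calc ((2 : ℝ) ^ k)⁻¹ = (dyadicShell k j).card • (((2 : ℝ) ^ (j + 1)) ^ k)⁻¹ := by
          rw [nsmul_eq_mul, hcard, pow_succ, mul_pow, mul_inv, ← mul_assoc,
            mul_inv_cancel₀ (by positivity), one_mul]
      _ ≤ _ := Finset.card_nsmul_le_sum _ _ _ fun m hm => by
          gcongr
          · exact pow_pos ((pow_pos two_pos j).trans (lt_norm_of_mem_dyadicShell hk hm)) k
          · exact norm_le_of_mem_dyadicShell hm
  · calc _ ≤ (dyadicShell k j).card • (((2 : ℝ) ^ j) ^ k)⁻¹ :=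
          Finset.sum_le_card_nsmul _ _ _ fun m hm => by
            gcongr; exact (lt_norm_of_mem_dyadicShell hk hm).le
      _ = 1 := by rw [nsmul_eq_mul, hcard, mul_inv_cancel₀ (by positivity)]

lemma sum_dyadicBlock_norm_rpow_neg (hk : 1 ≤ k) (J : ℕ) :
    J * ((2 : ℝ) ^ k)⁻¹ ≤ ∑ m ∈ dyadicBlock k J, ‖m‖ ^ (-(k : ℝ)) ∧
      ∑ m ∈ dyadicBlock k J, ‖m‖ ^ (-(k : ℝ)) ≤ J := by
  rw [dyadicBlock, Finset.sum_biUnion ((pairwise_disjoint_dyadicShell hk).set_pairwise _)]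
  constructor
  · simpa using Finset.card_nsmul_le_sum (Finset.range J) _ _ fun j _ =>
      (sum_dyadicShell_norm_rpow_neg hk j).1
  · simpa using Finset.sum_le_card_nsmul (Finset.range J) _ _ fun j _ =>
      (sum_dyadicShell_norm_rpow_neg hk j).2

variable {Q : (Fin k → ℤ) → ℤ} {C : ℝ}

lemma pos_of_le_mul_norm_sq (hk : 1 ≤ k)
    (hQ : ∀ m ≠ 0, 0 < (Q m : ℝ) ∧ (Q m : ℝ) ≤ C * ‖m‖ ^ 2) : 0 < C := by
  have hm : (Pi.single ⟨0, hk⟩ 1 : Fin k → ℤ) ≠ 0 := by simp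
  exact pos_of_mul_pos_left ((hQ _ hm).1.trans_le (hQ _ hm).2) (by positivity)

lemma le_sum_dyadicBlock_rpow_neg (hk : 1 ≤ k)
    (hQ : ∀ m ≠ 0, 0 < (Q m : ℝ) ∧ (Q m : ℝ) ≤ C * ‖m‖ ^ 2) {a e : ℝ} (he : 0 ≤ e)
    (hae : a + 2 * e ≤ k) (J : ℕ) :
    C ^ (-e) * (J * ((2 : ℝ) ^ k)⁻¹) ≤
      ∑ m ∈ dyadicBlock k J, ‖m‖ ^ (-a) * (Q m : ℝ) ^ (-e) := by
  have hC := pos_of_le_mul_norm_sq hk hQ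
  refine ((mul_le_mul_iff_right₀ (by positivity)).2
    (sum_dyadicBlock_norm_rpow_neg hk J).1).trans ?_
  rw [Finset.mul_sum]
  refine Finset.sum_le_sum fun m hm => ?_
  have h1 := one_le_norm_of_mem_dyadicBlock hk hm
  have hm0 := ne_zero_of_mem_dyadicBlock hk hm
  calc C ^ (-e) * ‖m‖ ^ (-(k : ℝ))
      = ‖m‖ ^ (-(k : ℝ) + 2 * e) * (C ^ (-e) * ‖m‖ ^ (-(2 * e))) := by
        rw [mul_left_comm, ← Real.rpow_add (one_pos.trans_le h1)]; ring_nf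
    _ ≤ ‖m‖ ^ (-a) * (Q m : ℝ) ^ (-e) :=
        mul_le_mul (Real.rpow_le_rpow_of_exponent_le h1 (by linarith))
          (mul_rpow_neg_le_rpow_neg_of_le_mul_sq (hQ m hm0).1 (norm_nonneg m) (hQ m hm0).2 he)
          (by positivity) (by positivity)

end DyadicShell

section FracRadon

variable {k : ℕ}

def fracRadon (Q₁ Q₂ : (Fin k → ℤ) → ℤ) (e : ℝ) (f : (Fin k → ℤ) × ℤ → ℂ)
    (nt : (Fin k → ℤ) × ℤ) : ℂ :=
  ∑' m : Fin k → ℤ,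
    if m = 0 then 0 else f (nt.1 - m, nt.2 - Q₁ m) / Complex.ofReal ((Q₂ m : ℝ) ^ e)

def FracRadonBounded (Q₁ Q₂ : (Fin k → ℤ) → ℤ) (e : ℝ) (p q : ℝ≥0∞) : Prop :=
  ∃ A : ℝ≥0, ∀ f : (Fin k → ℤ) × ℤ → ℂ, (Function.support f).Finite →
    eLpNorm (fracRadon Q₁ Q₂ e f) q Measure.count ≤ A * eLpNorm f p Measure.count

variable {Q₁ Q₂ : (Fin k → ℤ) → ℤ} {e : ℝ}

lemma enorm_fracRadon_indicator_zero_rpow {n : Fin k → ℤ} (hn : n ≠ 0) (hQ : 0 < (Q₂ n : ℝ))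
    {r : ℝ} (hr : 0 ≤ r) :
    ‖fracRadon Q₁ Q₂ e (({0} : Set _).indicator fun _ => 1) (n, Q₁ n)‖ₑ ^ r =
      ENNReal.ofReal ((Q₂ n : ℝ) ^ (-(e * r))) := by
  rw [fracRadon, tsum_eq_single n fun m hmn => by simp [sub_ne_zero.2 (Ne.symm hmn)],
    if_neg hn, sub_self, sub_self,
    Set.indicator_of_mem (by simp : ((0 : Fin k → ℤ), (0 : ℤ)) ∈ ({0} : Set _)), one_div,
    ← ofReal_norm, norm_inv, Complex.norm_real, Real.norm_of_nonneg (by positivity),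
    ENNReal.ofReal_rpow_of_nonneg (by positivity) hr, ← Real.rpow_neg hQ.le,
    ← Real.rpow_mul hQ.le, neg_mul]

lemma tsum_enorm_fracRadon_indicator_zero_rpow_eq_top (hk : 1 ≤ k) {C : ℝ}
    (hQ₂ : ∀ m ≠ 0, 0 < (Q₂ m : ℝ) ∧ (Q₂ m : ℝ) ≤ C * ‖m‖ ^ 2) (he : 0 ≤ e) {r : ℝ}
    (hr : 0 ≤ r) (her : 2 * (e * r) ≤ k) :
    ∑' x, ‖fracRadon Q₁ Q₂ e (({0} : Set _).indicator fun _ => 1) x‖ₑ ^ r = ∞ := by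
  set δ := C ^ (-(e * r)) * ((2 : ℝ) ^ k)⁻¹
  have hδ : 0 < δ := by have := pos_of_le_mul_norm_sq hk hQ₂; positivity
  by_contra h
  obtain ⟨J, hJ⟩ := ENNReal.exists_nat_mul_gt (ENNReal.ofReal_pos.2 hδ).ne' h
  refine hJ.not_ge ?_
  have hsum := le_sum_dyadicBlock_rpow_neg hk hQ₂ (a := 0) (e := e * r) (by positivity)
    (by linarith) J
  simp only [neg_zero, Real.rpow_zero, one_mul] at hsum
  calc (J : ℝ≥0∞) * ENNReal.ofReal δ
      ≤ ENNReal.ofReal (∑ m ∈ dyadicBlock k J, (Q₂ m : ℝ) ^ (-(e * r))) := by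
        rw [← ENNReal.ofReal_natCast, ← ENNReal.ofReal_mul (Nat.cast_nonneg _)]
        exact ENNReal.ofReal_le_ofReal (hsum.trans_eq' (by ring))
    _ = ∑ m ∈ dyadicBlock k J, ‖fracRadon Q₁ Q₂ e _ (m, Q₁ m)‖ₑ ^ r := by
        rw [ENNReal.ofReal_sum_of_nonneg fun m hm =>
          Real.rpow_nonneg (hQ₂ m (ne_zero_of_mem_dyadicBlock hk hm)).1.le _]
        refine Finset.sum_congr rfl fun m hm => ?_
        have hm0 := ne_zero_of_mem_dyadicBlock hk hm
        rw [enorm_fracRadon_indicator_zero_rpow hm0 (hQ₂ m hm0).1 hr]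
    _ ≤ ∑' m, ‖fracRadon Q₁ Q₂ e _ (m, Q₁ m)‖ₑ ^ r := ENNReal.sum_le_tsum _
    _ ≤ _ := ENNReal.tsum_comp_le_tsum_of_injective (fun _ _ h => congrArg Prod.fst h) _

end FracRadon

section GraphTestFun

variable {k : ℕ} (Q₁ : (Fin k → ℤ) → ℤ)

lemma neg_graph_injective : Function.Injective fun m : Fin k → ℤ => (-m, -Q₁ m) :=
  fun _ _ h => neg_injective (congrArg Prod.fst h)

def graphTestFun (w : (Fin k → ℤ) → ℂ) : (Fin k → ℤ) × ℤ → ℂ :=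
  Function.extend (fun m => (-m, -Q₁ m)) w 0

variable {Q₁} {w : (Fin k → ℤ) → ℂ}

lemma graphTestFun_apply (m : Fin k → ℤ) : graphTestFun Q₁ w (-m, -Q₁ m) = w m :=
  (neg_graph_injective Q₁).extend_apply _ _ m

lemma finite_support_graphTestFun (hw : (Function.support w).Finite) :
    (Function.support (graphTestFun Q₁ w)).Finite :=
  (hw.image _).subset Function.support_extend_zero_subset

lemma fracRadon_graphTestFun_zero (Q₂ : (Fin k → ℤ) → ℤ) (e : ℝ) :
    fracRadon Q₁ Q₂ e (graphTestFun Q₁ w) 0 =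
      ∑' m, if m = 0 then 0 else w m / Complex.ofReal ((Q₂ m : ℝ) ^ e) := by
  simp only [fracRadon, Prod.fst_zero, Prod.snd_zero, zero_sub, graphTestFun_apply]

lemma tsum_enorm_rpow_graphTestFun {s : ℝ} (hs : 0 < s) :
    ∑' x, ‖graphTestFun Q₁ w x‖ₑ ^ s = ∑' m, ‖w m‖ₑ ^ s := by
  rw [← (neg_graph_injective Q₁).tsum_eq fun x hx => ?_]
  · simp only [graphTestFun_apply]
  · by_contra h
    simp [graphTestFun, Function.extend_apply' _ _ _ fun ⟨m, hm⟩ => h ⟨m, hm⟩, hs] at hx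

lemma enorm_graphTestFun_le {c : ℝ≥0∞} (h : ∀ m, ‖w m‖ₑ ≤ c) (x : (Fin k → ℤ) × ℤ) :
    ‖graphTestFun Q₁ w x‖ₑ ≤ c := by
  by_cases hx : ∃ m, (-m, -Q₁ m) = x
  · obtain ⟨m, rfl⟩ := hx
    rw [graphTestFun_apply]; exact h m
  · simp [graphTestFun, Function.extend_apply' _ _ _ hx]

end GraphTestFun

section DyadicWeight

variable {k : ℕ}

def dyadicWeight (k J : ℕ) (a : ℝ) (m : Fin k → ℤ) : ℂ :=
  if m ∈ dyadicBlock k J then ((‖m‖ ^ (-a) : ℝ) : ℂ) else 0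

lemma finite_support_dyadicWeight (J : ℕ) (a : ℝ) :
    (Function.support (dyadicWeight k J a)).Finite :=
  (dyadicBlock k J).finite_toSet.subset fun _ hm =>
    by_contra fun h => (Function.mem_support.1 hm) (if_neg h)

lemma fracRadon_graphTestFun_dyadicWeight_zero (hk : 1 ≤ k) {Q₁ Q₂ : (Fin k → ℤ) → ℤ}
    (hQ₂ : ∀ m ≠ 0, 0 < (Q₂ m : ℝ)) (J : ℕ) (a e : ℝ) :
    fracRadon Q₁ Q₂ e (graphTestFun Q₁ (dyadicWeight k J a)) 0 =
      ((∑ m ∈ dyadicBlock k J, ‖m‖ ^ (-a) * (Q₂ m : ℝ) ^ (-e) : ℝ) : ℂ) := by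
  rw [fracRadon_graphTestFun_zero, tsum_eq_sum (s := dyadicBlock k J) fun m hm => by
    simp [dyadicWeight, hm]]
  push_cast
  refine Finset.sum_congr rfl fun m hm => ?_
  rw [if_neg (ne_zero_of_mem_dyadicBlock hk hm), dyadicWeight, if_pos hm,
    Real.rpow_neg (hQ₂ m (ne_zero_of_mem_dyadicBlock hk hm)).le, Complex.ofReal_inv,
    div_eq_mul_inv]

lemma eLpNorm_graphTestFun_dyadicWeight_le (hk : 1 ≤ k) (Q₁ : (Fin k → ℤ) → ℤ) {p : ℝ≥0∞}
    (hp : p ≠ 0) {a : ℝ} (ha : k * p⁻¹.toReal ≤ a) (J : ℕ) :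
    eLpNorm (graphTestFun Q₁ (dyadicWeight k J a)) p Measure.count ≤
      (J : ℝ≥0∞) ^ p⁻¹.toReal := by
  have hw : ∀ m, ‖dyadicWeight k J a m‖ₑ =
      if m ∈ dyadicBlock k J then ENNReal.ofReal (‖m‖ ^ (-a)) else 0 := fun m => by
    unfold dyadicWeight
    split_ifs <;> simp [← ofReal_norm, Complex.norm_real, Real.rpow_nonneg]
  rcases eq_or_ne p ∞ with rfl | hp_top
  · simp only [ENNReal.inv_top, ENNReal.toReal_zero, mul_zero, ENNReal.rpow_zero,
      eLpNorm_exponent_top, eLpNormEssSup_count] at ha ⊢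
    refine iSup_le (enorm_graphTestFun_le fun m => ?_)
    rw [hw]
    split_ifs with hm
    · exact ENNReal.ofReal_le_one.2 (Real.rpow_le_one_of_one_le_of_nonpos
        (one_le_norm_of_mem_dyadicBlock hk hm) (by linarith))
    · exact zero_le_one
  set s := p.toReal
  have hs : 0 < s := ENNReal.toReal_pos hp hp_top
  rw [ENNReal.toReal_inv] at ha ⊢
  rw [eLpNorm_count_eq_tsum _ hp hp_top, tsum_enorm_rpow_graphTestFun hs]
  gcongr
  calc ∑' m, ‖dyadicWeight k J a m‖ₑ ^ s
      = ∑ m ∈ dyadicBlock k J, ENNReal.ofReal (‖m‖ ^ (-(a * s))) := by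
        rw [tsum_eq_sum (s := dyadicBlock k J) fun m hm => by simp [hw, hm, hs]]
        refine Finset.sum_congr rfl fun m hm => ?_
        rw [hw, if_pos hm, ENNReal.ofReal_rpow_of_nonneg (by positivity) hs.le,
          ← Real.rpow_mul (norm_nonneg m), neg_mul]
    _ ≤ ∑ m ∈ dyadicBlock k J, ENNReal.ofReal (‖m‖ ^ (-(k : ℝ))) := by
        gcongr with m hm
        · exact one_le_norm_of_mem_dyadicBlock hk hm
        have := mul_le_mul_of_nonneg_right ha hs.le
        rw [mul_assoc, inv_mul_cancel₀ hs.ne', mul_one] at this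
        linarith
    _ ≤ J := by
        rw [← ENNReal.ofReal_sum_of_nonneg fun m _ => by positivity, ← ENNReal.ofReal_natCast]
        exact ENNReal.ofReal_le_ofReal (sum_dyadicBlock_norm_rpow_neg hk J).2

end DyadicWeight

theorem one_div_lt_of_fracRadonBounded {k : ℕ} (hk : 1 ≤ k) {Q₁ Q₂ : (Fin k → ℤ) → ℤ}
    {C : ℝ} (hQ₂ : ∀ m ≠ 0, 0 < (Q₂ m : ℝ) ∧ (Q₂ m : ℝ) ≤ C * ‖m‖ ^ 2) {lam : ℝ}
    (hlam : 0 < lam) {p q : ℝ≥0∞} (hq : q ≠ 0)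
    (hJ : FracRadonBounded Q₁ Q₂ (k * lam / 2) p q) :
    1 / q < ENNReal.ofReal lam := by
  obtain ⟨A, hA⟩ := hJ
  by_contra! hlq
  have hq_top : q ≠ ∞ := by
    rintro rfl
    simp only [ENNReal.div_top, nonpos_iff_eq_zero, ENNReal.ofReal_eq_zero] at hlq
    linarith
  set r := q.toReal
  have hr : 0 < r := ENNReal.toReal_pos hq hq_top
  have hlr : lam * r ≤ 1 := by
    have := ENNReal.toReal_mono (by simpa using hq) hlq
    rw [ENNReal.toReal_ofReal hlam.le, one_div, ENNReal.toReal_inv] at this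
    exact (le_div_iff₀ hr).1 (by rwa [one_div])
  have her : 2 * (k * lam / 2 * r) ≤ k := by
    calc 2 * (k * lam / 2 * r) = k * (lam * r) := by ring
      _ ≤ k := mul_le_of_le_one_right (Nat.cast_nonneg k) hlr
  have htop := tsum_enorm_fracRadon_indicator_zero_rpow_eq_top (Q₁ := Q₁) (e := k * lam / 2)
    hk hQ₂ (by positivity) hr.le her
  have hδ : eLpNorm (({0} : Set ((Fin k → ℤ) × ℤ)).indicator fun _ => (1 : ℂ)) p
      Measure.count ≤ 1 :=
    (eLpNorm_indicator_const_le _ _).trans (by simp)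
  have := hA (({0} : Set ((Fin k → ℤ) × ℤ)).indicator fun _ => 1)
    ((Set.finite_singleton 0).subset Set.support_indicator_subset)
  rw [eLpNorm_count_eq_tsum _ hq hq_top, htop, ENNReal.top_rpow_of_pos (by positivity)] at this
  exact ENNReal.coe_ne_top (top_le_iff.1 (this.trans (mul_le_of_le_one_right' hδ)))

theorem one_sub_lt_one_div_of_fracRadonBounded {k : ℕ} (hk : 1 ≤ k)
    {Q₁ Q₂ : (Fin k → ℤ) → ℤ} {C : ℝ}
    (hQ₂ : ∀ m ≠ 0, 0 < (Q₂ m : ℝ) ∧ (Q₂ m : ℝ) ≤ C * ‖m‖ ^ 2) {lam : ℝ} (hlam₀ : 0 < lam)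
    (hlam₁ : lam < 1) {p q : ℝ≥0∞} (hq : q ≠ 0)
    (hJ : FracRadonBounded Q₁ Q₂ (k * lam / 2) p q) :
    1 - ENNReal.ofReal lam < 1 / p := by
  obtain ⟨A, hA⟩ := hJ
  by_contra! hp
  rw [one_div, ← ENNReal.ofReal_one, ← ENNReal.ofReal_sub _ hlam₀.le] at hp
  have hp₀ : p ≠ 0 := by rintro rfl; simp at hp
  have hρ : p⁻¹.toReal ≤ 1 - lam := ENNReal.toReal_le_of_le_ofReal (by linarith) hp
  set e := (k : ℝ) * lam / 2
  set a := (k : ℝ) * (1 - lam)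
  set c := C ^ (-e) * ((2 : ℝ) ^ k)⁻¹
  have hc : 0 < c := by have := pos_of_le_mul_norm_sq hk hQ₂; positivity
  obtain ⟨J, hJ⟩ := exists_mul_rpow_lt_ofReal_mul hc ENNReal.toReal_nonneg (by linarith) A
  refine hJ.not_ge ?_
  set f := graphTestFun Q₁ (dyadicWeight k J a)
  have hsum : c * J ≤ ∑ m ∈ dyadicBlock k J, ‖m‖ ^ (-a) * (Q₂ m : ℝ) ^ (-e) :=
    (le_sum_dyadicBlock_rpow_neg hk hQ₂ (by positivity) (by simp only [a, e]; linarith)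
      J).trans_eq' (by ring)
  calc ENNReal.ofReal (c * J) ≤ ‖fracRadon Q₁ Q₂ e f 0‖ₑ := by
        rw [fracRadon_graphTestFun_dyadicWeight_zero hk (fun m hm => (hQ₂ m hm).1),
          ← ofReal_norm, Complex.norm_real,
          Real.norm_of_nonneg ((mul_nonneg hc.le (Nat.cast_nonneg J)).trans hsum)]
        exact ENNReal.ofReal_le_ofReal hsum
    _ ≤ eLpNorm (fracRadon Q₁ Q₂ e f) q Measure.count := enorm_le_eLpNorm_count _ _ hq
    _ ≤ A * eLpNorm f p Measure.count :=
        hA f (finite_support_graphTestFun (finite_support_dyadicWeight J a))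
    _ ≤ A * (J : ℝ≥0∞) ^ p⁻¹.toReal := by
        gcongr
        exact eLpNorm_graphTestFun_dyadicWeight_le hk Q₁ hp₀
          (by nlinarith [Nat.cast_nonneg (α := ℝ) k]) J

theorem discrete_fractional_radon_necessary_ii_general
    (k : ℕ) (hk : 1 ≤ k)
    (A₂ : Matrix (Fin k) (Fin k) ℤ)
    (hA₂pos : (A₂.map ((↑) : ℤ → ℝ)).PosDef)
    (Q₁ Q₂ : (Fin k → ℤ) → ℤ)
    (hQ₂ : ∀ x, 2 * Q₂ x = x ⬝ᵥ A₂.mulVec x)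
    (lam : ℝ) (hlam₀ : 0 < lam) (hlam₁ : lam < 1)
    (p q : ℝ≥0∞) (hq₁ : 1 ≤ q)
    (hbound : ∃ A : ℝ≥0, ∀ f : ((Fin k → ℤ) × ℤ) → ℂ, (Function.support f).Finite →
      eLpNorm
        (fun nt : (Fin k → ℤ) × ℤ =>
          ∑' m : Fin k → ℤ,
            if m = 0 then 0
            else f (nt.1 - m, nt.2 - Q₁ m) /
              Complex.ofReal ((Q₂ m : ℝ) ^ ((k : ℝ) * lam / 2)))
        q Measure.count
      ≤ (A : ℝ≥0∞) * eLpNorm f p Measure.count) :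
    1 / q < ENNReal.ofReal lam ∧ 1 - ENNReal.ofReal lam < 1 / p := by
  have hQ₂bound (m : Fin k → ℤ) (hm : m ≠ 0) :=
    pos_and_le_mul_norm_sq_of_two_mul_eq hA₂pos hQ₂ hm
  have hq : q ≠ 0 := (zero_lt_one.trans_le hq₁).ne'
  exact ⟨one_div_lt_of_fracRadonBounded hk hQ₂bound hlam₀ hq hbound,
    one_sub_lt_one_div_of_fracRadonBounded hk hQ₂bound hlam₀ hlam₁ hq hbound⟩

/-- necessity of condition (ii) for `(ℓ^p, ℓ^q)` boundedness of `J_{Q₁,Q₂,λ}`,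
with exponents `1 ≤ p, q ≤ ∞` taken in `ℝ≥0∞`. -/
theorem discrete_fractional_radon_necessary_ii
    (k : ℕ) (hk : 1 ≤ k)
    (A₁ A₂ : Matrix (Fin k) (Fin k) ℤ)
    (hA₁symm : A₁.IsSymm) (hA₂symm : A₂.IsSymm)
    (hA₁pos : (A₁.map ((↑) : ℤ → ℝ)).PosDef)
    (hA₂pos : (A₂.map ((↑) : ℤ → ℝ)).PosDef)
    (hA₁even : ∀ i, 2 ∣ A₁ i i) (hA₂even : ∀ i, 2 ∣ A₂ i i)
    (Q₁ Q₂ : (Fin k → ℤ) → ℤ)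
    (hQ₁ : ∀ x, 2 * Q₁ x = x ⬝ᵥ A₁.mulVec x)
    (hQ₂ : ∀ x, 2 * Q₂ x = x ⬝ᵥ A₂.mulVec x)
    (lam : ℝ) (hlam₀ : 0 < lam) (hlam₁ : lam < 1)
    (p q : ℝ≥0∞) (hp₁ : 1 ≤ p) (hq₁ : 1 ≤ q)
    (hbound : ∃ A : ℝ≥0, ∀ f : ((Fin k → ℤ) × ℤ) → ℂ, (Function.support f).Finite →
      eLpNorm
        (fun nt : (Fin k → ℤ) × ℤ =>
          ∑' m : Fin k → ℤ,
            if m = 0 then 0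
            else f (nt.1 - m, nt.2 - Q₁ m) /
              Complex.ofReal ((Q₂ m : ℝ) ^ ((k : ℝ) * lam / 2)))
        q Measure.count
      ≤ (A : ℝ≥0∞) * eLpNorm f p Measure.count) :
    1 / q < ENNReal.ofReal lam ∧ 1 - ENNReal.ofReal lam < 1 / p :=
  discrete_fractional_radon_necessary_ii_general k hk A₂ hA₂pos Q₁ Q₂ hQ₂ lam hlam₀ hlam₁ p q hq₁
    hbound
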